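/- Let K ⊆ ℝⁿ be a compact convex set with 0 in its interior, γ its gauge, U ⊆ ℝⁿ a bounded open set with nonempty boundary, and φ : ℝⁿ → ℝ continuous. Suppose y ∈ ∂U is a ρ-closest point to x ∈ U. Then: (a) y is a ρ-closest point to every point of the open segment (x, y) = {x + t(y − x) : 0 < t < 1}, and ρ varies linearly along [x, y]: for 0 ≤ t ≤ γ(x − y), ρ(x − (t/γ(x − y))(x − y)) = γ(x − y) − t + φ(y); (b) if in addition φ satisfies the strict Lipschitz property, then the open segment (x, y) is contained in U. -/

import Mathlib

/-!
Moving from `x` towards its `ρ`-closest point `y` costs exactly what the gauge of the step is,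
because `γ(x - y)` splits additively along the segment. Since `ρ` is `1`-Lipschitz for `γ`
(triangle inequality for the gauge), `ρ` can drop at most by that amount, while `y` itself
certifies that it drops at least that much. If the segment left `U`, it would meet `∂U` at some
`z ≠ y`; then the strict Lipschitz property makes `z` strictly cheaper than `y` from `x`.
-/

open Set Filter Topology MeasureTheory
open scoped NNReal

noncomputable section

abbrev Euc (n : ℕ) := EuclideanSpace ℝ (Fin n)

noncomputable def rinner {n : ℕ} (x y : Euc n) : ℝ := inner ℝ x y

def polarSet {n : ℕ} (K : Set (Euc n)) : Set (Euc n) :=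
  {x | ∀ y ∈ K, rinner x y ≤ 1}

noncomputable def rho {n : ℕ} (K U : Set (Euc n)) (φ : Euc n → ℝ) (x : Euc n) : ℝ :=
  sInf ((fun y => gauge K (x - y) + φ y) '' frontier U)

noncomputable def rhoBar {n : ℕ} (K U : Set (Euc n)) (φ : Euc n → ℝ) (x : Euc n) : ℝ :=
  sInf ((fun y => gauge K (y - x) - φ y) '' frontier U)

def StrictLipschitzWrt {n : ℕ} (K : Set (Euc n)) (φ : Euc n → ℝ) : Prop :=
  ∀ x y : Euc n, x ≠ y → -gauge K (y - x) < φ x - φ y ∧ φ x - φ y < gauge K (x - y)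

def StrictlyConvexGauge {n : ℕ} (K : Set (Euc n)) : Prop :=
  ∀ x y : Euc n, (¬ ∃ c : ℝ, 0 ≤ c ∧ (x = c • y ∨ y = c • x)) →
    gauge K (x + y) < gauge K x + gauge K y

theorem IsPreconnected.inter_frontier_nonempty {X : Type*} [TopologicalSpace X] {s t : Set X}
    (hs : IsPreconnected s) (hst : (s ∩ t).Nonempty) (hs_t : (s \ t).Nonempty) :
    (s ∩ frontier t).Nonempty := by
  by_contra h
  have hnotfr : ∀ a ∈ s, a ∉ frontier t := fun a ha hfr => h ⟨a, ha, hfr⟩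
  have hcover : s ⊆ interior t ∪ (closure t)ᶜ := by
    intro a ha
    by_cases hcl : a ∈ closure t
    · exact Or.inl (by_contra fun hint => hnotfr a ha ⟨hcl, hint⟩)
    · exact Or.inr hcl
  obtain ⟨a, has, hat⟩ := hst
  obtain ⟨b, hbs, hbt⟩ := hs_t
  obtain ⟨c, -, hint, hcl⟩ := hs _ _ isOpen_interior isClosed_closure.isOpen_compl hcover
    ⟨a, has, (hcover has).resolve_right (not_not.mpr (subset_closure hat))⟩
    ⟨b, hbs, (hcover hbs).resolve_left (fun hint => hbt (interior_subset hint))⟩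
  exact hcl (interior_subset_closure hint)

section Segment

variable {E : Type*} [AddCommGroup E] [Module ℝ E]

theorem add_smul_sub_ne_right {x y : E} {u : ℝ} (hxy : x ≠ y) (hu : u ≠ 1) :
    x + u • (y - x) ≠ y := by
  have h := AffineMap.lineMap_eq_right_iff (k := ℝ) (p₀ := x) (p₁ := y) (c := u)
  rw [AffineMap.lineMap_apply_module', add_comm] at h
  exact fun heq => (h.mp heq).elim hxy hu

theorem exists_add_smul_sub_mem_frontier [TopologicalSpace E] [IsTopologicalAddGroup E]
    [ContinuousSMul ℝ E] {U : Set E} {x y : E} {t : ℝ} (ht : 0 ≤ t) (hx : x ∈ U)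
    (hxt : x + t • (y - x) ∉ U) : ∃ u ∈ Icc 0 t, x + u • (y - x) ∈ frontier U := by
  have hseg : IsPreconnected ((fun u : ℝ => x + u • (y - x)) '' Icc 0 t) :=
    isPreconnected_Icc.image _ (by fun_prop)
  obtain ⟨_, ⟨u, hu, rfl⟩, hfr⟩ := hseg.inter_frontier_nonempty
    ⟨x, ⟨0, left_mem_Icc.mpr ht, by simp⟩, hx⟩
    ⟨_, ⟨t, right_mem_Icc.mpr ht, rfl⟩, hxt⟩
  exact ⟨u, hu, hfr⟩

variable {K : Set E}

theorem gauge_add_smul_sub_sub (x y : E) {s : ℝ} (hs : s ≤ 1) :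
    gauge K (x + s • (y - x) - y) = (1 - s) * gauge K (x - y) := by
  rw [show x + s • (y - x) - y = (1 - s) • (x - y) by module,
    gauge_smul_of_nonneg (sub_nonneg.mpr hs), smul_eq_mul]

theorem gauge_sub_add_smul_sub (x y : E) {s : ℝ} (hs : 0 ≤ s) :
    gauge K (x - (x + s • (y - x))) = s * gauge K (x - y) := by
  rw [show x - (x + s • (y - x)) = s • (x - y) by module, gauge_smul_of_nonneg hs, smul_eq_mul]

end Segment

section Rho

variable {n : ℕ} {K U : Set (Euc n)} {φ : Euc n → ℝ}

theorem bddBelow_rho_image (hU : Bornology.IsBounded U) (hφ : Continuous φ) (z : Euc n) :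
    BddBelow ((fun w => gauge K (z - w) + φ w) '' frontier U) := by
  have hcpt : IsCompact (frontier U) :=
    Metric.isCompact_of_isClosed_isBounded isClosed_frontier
      (hU.closure.subset frontier_subset_closure)
  obtain ⟨m, hm⟩ := hcpt.bddBelow_image hφ.continuousOn
  refine ⟨m, ?_⟩
  rintro _ ⟨w, hw, rfl⟩
  have := hm (mem_image_of_mem φ hw)
  have := gauge_nonneg (s := K) (z - w)
  linarith

theorem rho_le (hU : Bornology.IsBounded U) (hφ : Continuous φ) (z : Euc n) {w : Euc n}
    (hw : w ∈ frontier U) : rho K U φ z ≤ gauge K (z - w) + φ w :=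
  csInf_le (bddBelow_rho_image hU hφ z) ⟨w, hw, rfl⟩

theorem rho_le_gauge_add_rho (hKconv : Convex ℝ K) (hK : Absorbent ℝ K)
    (hU : Bornology.IsBounded U) (hUfr : (frontier U).Nonempty) (hφ : Continuous φ)
    (x p : Euc n) : rho K U φ x ≤ gauge K (x - p) + rho K U φ p := by
  rw [← sub_le_iff_le_add']
  refine le_csInf (hUfr.image _) ?_
  rintro _ ⟨w, hw, rfl⟩
  have hxw := rho_le (K := K) hU hφ x hw
  have htri := gauge_add_le hKconv hK (x - p) (p - w)
  rw [sub_add_sub_cancel] at htri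
  linarith

variable {x y : Euc n}

theorem rho_add_smul_sub (hKconv : Convex ℝ K) (hK : Absorbent ℝ K)
    (hU : Bornology.IsBounded U) (hφ : Continuous φ) (hy : y ∈ frontier U)
    (hclosest : rho K U φ x = gauge K (x - y) + φ y) (s : ℝ) (hs₀ : 0 ≤ s)
    (hs₁ : s ≤ 1) :
    rho K U φ (x + s • (y - x)) = (1 - s) * gauge K (x - y) + φ y := by
  have hle := rho_le (K := K) hU hφ (x + s • (y - x)) hy
  have hge := rho_le_gauge_add_rho hKconv hK hU ⟨y, hy⟩ hφ x (x + s • (y - x))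
  rw [gauge_add_smul_sub_sub x y hs₁] at hle
  rw [gauge_sub_add_smul_sub x y hs₀, hclosest] at hge
  linarith

theorem add_smul_sub_notMem_frontier (hU : Bornology.IsBounded U) (hφ : Continuous φ)
    (hφL : StrictLipschitzWrt K φ) (hxy : x ≠ y)
    (hclosest : rho K U φ x = gauge K (x - y) + φ y) {u : ℝ} (hu₀ : 0 ≤ u) (hu₁ : u < 1) :
    x + u • (y - x) ∉ frontier U := by
  intro hz
  have hcheaper := (hφL _ y (add_smul_sub_ne_right hxy hu₁.ne)).2
  have hvia := rho_le (K := K) hU hφ x hz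
  rw [gauge_add_smul_sub_sub x y hu₁.le] at hcheaper
  rw [gauge_sub_add_smul_sub x y hu₀, hclosest] at hvia
  linarith

end Rho

theorem closest_point_segment_general {n : ℕ}
    (K : Set (Euc n)) (hKconv : Convex ℝ K)
    (hK0 : (0 : Euc n) ∈ interior K)
    (U : Set (Euc n)) (hUopen : IsOpen U) (hUbdd : Bornology.IsBounded U)
    (φ : Euc n → ℝ) (hφcont : Continuous φ)
    (x : Euc n) (hx : x ∈ U)
    (y : Euc n) (hy : y ∈ frontier U)
    (hclosest : rho K U φ x = gauge K (x - y) + φ y) :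
    (∀ t : ℝ, 0 < t → t < 1 →
      rho K U φ (x + t • (y - x)) =
        gauge K ((x + t • (y - x)) - y) + φ y) ∧
    (∀ t : ℝ, 0 ≤ t → t ≤ gauge K (x - y) →
      rho K U φ (x - (t / gauge K (x - y)) • (x - y)) = gauge K (x - y) - t + φ y) ∧
    (StrictLipschitzWrt K φ → ∀ t : ℝ, 0 < t → t < 1 → x + t • (y - x) ∈ U) := by
  have hK : Absorbent ℝ K := absorbent_nhds_zero (mem_interior_iff_mem_nhds.mp hK0)
  have hrho := rho_add_smul_sub hKconv hK hUbdd hφcont hy hclosest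
  refine ⟨fun t ht₀ ht₁ => ?_, fun t ht₀ htg => ?_, fun hφL t ht₀ ht₁ => ?_⟩
  · rw [hrho t ht₀.le ht₁.le, gauge_add_smul_sub_sub x y ht₁.le]
  · set g := gauge K (x - y)
    have hdiv : t / g * g = t := by
      rcases eq_or_ne g 0 with hg | hg
      · simp [hg, le_antisymm (hg ▸ htg) ht₀]
      · exact div_mul_cancel₀ t hg
    rw [show x - (t / g) • (x - y) = x + (t / g) • (y - x) by module,
      hrho (t / g) (div_nonneg ht₀ (ht₀.trans htg)) (div_le_one_of_le₀ htg (ht₀.trans htg))]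
    linear_combination -hdiv
  · have hxy : x ≠ y := ((disjoint_frontier_iff_isOpen.mpr hUopen).ne_of_mem hy hx).symm
    by_contra hxt
    obtain ⟨u, hu, hfr⟩ := exists_add_smul_sub_mem_frontier ht₀.le hx hxt
    exact add_smul_sub_notMem_frontier hUbdd hφcont hφL hxy hclosest hu.1 (hu.2.trans_lt ht₁)
      hfr

/-- if `y ∈ ∂U` is a `ρ`-closest point to `x ∈ U`, then (a) `y` is a
`ρ`-closest point to every point of the open segment `(x, y)`, and `ρ` varies linearly
along `[x, y]`; (b) if moreover `φ` is strictly Lipschitz, the open segment `(x, y)`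
lies in `U`. -/
theorem closest_point_segment {n : ℕ}
    (K : Set (Euc n)) (hKcpt : IsCompact K) (hKconv : Convex ℝ K)
    (hK0 : (0 : Euc n) ∈ interior K)
    (U : Set (Euc n)) (hUopen : IsOpen U) (hUbdd : Bornology.IsBounded U)
    (hUfr : (frontier U).Nonempty)
    (φ : Euc n → ℝ) (hφcont : Continuous φ)
    (x : Euc n) (hx : x ∈ U)
    (y : Euc n) (hy : y ∈ frontier U)
    (hclosest : rho K U φ x = gauge K (x - y) + φ y) :
    (∀ t : ℝ, 0 < t → t < 1 →
      rho K U φ (x + t • (y - x)) =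
        gauge K ((x + t • (y - x)) - y) + φ y) ∧
    (∀ t : ℝ, 0 ≤ t → t ≤ gauge K (x - y) →
      rho K U φ (x - (t / gauge K (x - y)) • (x - y)) = gauge K (x - y) - t + φ y) ∧
    (StrictLipschitzWrt K φ → ∀ t : ℝ, 0 < t → t < 1 → x + t • (y - x) ∈ U) :=
  closest_point_segment_general K hKconv hK0 U hUopen hUbdd φ hφcont x hx y hy hclosest
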